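/- Let (t_i)_{i=0}^N be a knot sequence, h_N = min over the interior indices of (t_i − t_{i-1}) > 0, and let α < k − 1 be a positive integer. Then for all j and all θ in (t_j, t_{j+k}), |d^α/dθ^α B_{j,k}(θ)| ≤ (2^α / h_N^α) · (k−1)!/(k−α−1)!. -/

import Mathlib

/-!
Off the knots,
`d/dx B_{j,k+1} = k (B_{j,k} / (t_{j+k} - t_j) - B_{j+1,k} / (t_{j+k+1} - t_{j+1}))`
follows from the defining recurrence by induction on `k`; for order at least three both sides are
continuous, so the formula holds everywhere and `B_{j,k}` is `C^{k-2}`. Each differentiation thus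
replaces a B-spline by two B-splines of one order less with coefficients at most `k / h_N`, and
after `α` steps the `2^α` terms are B-splines, which lie in `[0, 1]` because the B-splines of a
fixed order sum to at most one.
-/

/-- B-splines of order `k` for the knot sequence `t`, defined by the standard
recurrence: `Bspl t j 1` is the indicator of `[t j, t (j+1))` and
`Bspl t j (k+1) = ω_{j,k+1}·Bspl t j k + (1 − ω_{j+1,k+1})·Bspl t (j+1) k`. -/
noncomputable def Bspl (t : ℕ → ℝ) : ℕ → ℕ → ℝ → ℝ
  | _, 0, _ => 0
  | j, 1, x => if t j ≤ x ∧ x < t (j+1) then 1 else 0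
  | j, (k+2), x =>
      ((x - t j) / (t (j+k+1) - t j)) * Bspl t j (k+1) x
        + ((t (j+k+2) - x) / (t (j+k+2) - t (j+1))) * Bspl t (j+1) (k+1) x

open Filter Topology Set Finset

lemma eventually_le_iff_of_ne {α : Type*} [TopologicalSpace α] [LinearOrder α] [OrderTopology α]
    {a x : α} (h : a ≠ x) : ∀ᶠ y in 𝓝 x, (a ≤ y ↔ a ≤ x) := by
  rcases h.lt_or_gt with h | h
  · filter_upwards [lt_mem_nhds h] with y hy
    simp [hy.le, h.le]
  · filter_upwards [gt_mem_nhds h] with y hy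
    simp [not_le.2 hy, not_le.2 h]

lemma hasDerivAt_of_eventually_hasDerivAt {E : Type*} [NormedAddCommGroup E] [NormedSpace ℝ E]
    {f g : ℝ → E} {x : ℝ} (f_diff : ∀ᶠ y in 𝓝[≠] x, HasDerivAt f (g y) y)
    (hf : ContinuousAt f x) (hg : ContinuousAt g x) : HasDerivAt f (g x) x := by
  set s := {y | HasDerivAt f (g y) y}
  have hs : DifferentiableOn ℝ f s := fun y hy => hy.differentiableAt.differentiableWithinAt
  have hderiv : ∀ y ∈ s, g y = deriv f y := fun y hy => hy.deriv.symm
  have hleft : HasDerivWithinAt f (g x) (Iic x) x := by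
    have hsl : s ∈ 𝓝[<] x := nhdsWithin_mono _ (fun y hy => ne_of_lt hy) f_diff
    exact hasDerivWithinAt_Iic_of_tendsto_deriv hs hf.continuousWithinAt hsl
      ((tendsto_inf_left hg).congr' (eventually_of_mem hsl hderiv))
  have hright : HasDerivWithinAt f (g x) (Ici x) x := by
    have hsr : s ∈ 𝓝[>] x := nhdsWithin_mono _ (fun y hy => ne_of_gt hy) f_diff
    exact hasDerivWithinAt_Ici_of_tendsto_deriv hs hf.continuousWithinAt hsr
      ((tendsto_inf_left hg).congr' (eventually_of_mem hsr hderiv))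
  simpa using hleft.union hright

noncomputable def bsplWeight (t : ℕ → ℝ) (j k : ℕ) (x : ℝ) : ℝ :=
  (x - t j) / (t (j + k) - t j)

section BSpline

variable {t : ℕ → ℝ} {hN : ℝ}

lemma Bspl_zero (j : ℕ) (x : ℝ) : Bspl t j 0 x = 0 := rfl

lemma Bspl_one (j : ℕ) (x : ℝ) :
    Bspl t j 1 x = if t j ≤ x ∧ x < t (j + 1) then 1 else 0 := rfl

lemma Bspl_add_two (j k : ℕ) (x : ℝ) :
    Bspl t j (k + 2) x = (x - t j) / (t (j + k + 1) - t j) * Bspl t j (k + 1) x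
      + (t (j + k + 2) - x) / (t (j + k + 2) - t (j + 1)) * Bspl t (j + 1) (k + 1) x := rfl

lemma Bspl_add_two_eq_weight (ht : StrictMono t) (j k : ℕ) (x : ℝ) :
    Bspl t j (k + 2) x = bsplWeight t j (k + 1) x * Bspl t j (k + 1) x
      + (1 - bsplWeight t (j + 1) (k + 1) x) * Bspl t (j + 1) (k + 1) x := by
  have hd : t (j + k + 2) - t (j + 1) ≠ 0 := (sub_pos.2 (ht (by omega))).ne'
  rw [Bspl_add_two, bsplWeight, bsplWeight, show j + 1 + (k + 1) = j + k + 2 by omega]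
  congr 2
  field_simp
  ring

lemma Bspl_eq_zero_of_notMem (ht : Monotone t) :
    ∀ {k j : ℕ} {x : ℝ}, x ∉ Ico (t j) (t (j + k)) → Bspl t j k x = 0
  | 0, _, _, _ => rfl
  | 1, j, x, hx => if_neg hx
  | k + 2, j, x, hx => by
    have h₁ : x ∉ Ico (t j) (t (j + (k + 1))) := fun h =>
      hx ⟨h.1, h.2.trans_le (ht (by omega))⟩
    have h₂ : x ∉ Ico (t (j + 1)) (t (j + 1 + (k + 1))) := fun h =>
      hx ⟨(ht (by omega)).trans h.1, (show j + (k + 2) = j + 1 + (k + 1) by omega) ▸ h.2⟩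
    rw [Bspl_add_two, Bspl_eq_zero_of_notMem ht h₁, Bspl_eq_zero_of_notMem ht h₂]
    ring

lemma bsplWeight_mul_Bspl_mem_Icc (ht : StrictMono t) {j k : ℕ} {x : ℝ}
    (hB : 0 ≤ Bspl t j (k + 1) x) :
    bsplWeight t j (k + 1) x * Bspl t j (k + 1) x ∈ Icc 0 (Bspl t j (k + 1) x) := by
  by_cases hx : x ∈ Ico (t j) (t (j + (k + 1)))
  · have hd : 0 < t (j + (k + 1)) - t j := sub_pos.2 (ht (by omega))
    have hω₀ : 0 ≤ bsplWeight t j (k + 1) x := div_nonneg (by linarith [hx.1]) hd.le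
    have hω₁ : bsplWeight t j (k + 1) x ≤ 1 := (div_le_one hd).2 (by linarith [hx.2])
    exact ⟨mul_nonneg hω₀ hB, mul_le_of_le_one_left hB hω₁⟩
  · simp [Bspl_eq_zero_of_notMem ht.monotone hx]

lemma Bspl_nonneg (ht : StrictMono t) : ∀ {k j : ℕ} {x : ℝ}, 0 ≤ Bspl t j k x
  | 0, _, _ => le_rfl
  | 1, j, x => by rw [Bspl_one]; positivity
  | k + 2, j, x => by
    obtain ⟨h₀, -⟩ :=
      bsplWeight_mul_Bspl_mem_Icc ht (Bspl_nonneg ht (k := k + 1) (j := j) (x := x))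
    obtain ⟨-, h₁⟩ :=
      bsplWeight_mul_Bspl_mem_Icc ht (Bspl_nonneg ht (k := k + 1) (j := j + 1) (x := x))
    rw [Bspl_add_two_eq_weight ht]
    linarith

lemma sum_range_Bspl_le_one (ht : StrictMono t) :
    ∀ (k n : ℕ) (x : ℝ), ∑ j ∈ range n, Bspl t j k x ≤ 1
  | 0, n, x => by simp [Bspl_zero]
  | 1, n, x => by
    simp only [Bspl_one, Finset.sum_boole]
    exact_mod_cast Finset.card_le_one.2 fun a ha b hb => by
      simp only [Finset.mem_filter] at ha hb
      by_contra hab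
      rcases Nat.lt_or_gt_of_ne hab with h | h
      · linarith [ht.monotone (show a + 1 ≤ b by omega), ha.2.2, hb.2.1]
      · linarith [ht.monotone (show b + 1 ≤ a by omega), ha.2.1, hb.2.2]
  | k + 2, n, x => by
    set B : ℕ → ℝ := fun j => Bspl t j (k + 1) x
    set ωB : ℕ → ℝ := fun j => bsplWeight t j (k + 1) x * B j
    obtain ⟨-, h₀⟩ :=
      bsplWeight_mul_Bspl_mem_Icc ht (Bspl_nonneg ht (k := k + 1) (j := 0) (x := x))
    obtain ⟨hn, -⟩ :=
      bsplWeight_mul_Bspl_mem_Icc ht (Bspl_nonneg ht (k := k + 1) (j := n) (x := x))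
    calc ∑ j ∈ range n, Bspl t j (k + 2) x
        = ∑ j ∈ range n, B (j + 1) + ∑ j ∈ range n, (ωB j - ωB (j + 1)) := by
          rw [← Finset.sum_add_distrib]
          refine Finset.sum_congr rfl fun j _ => ?_
          rw [Bspl_add_two_eq_weight ht]
          ring
      _ = ∑ j ∈ range n, B (j + 1) + ωB 0 - ωB n := by rw [Finset.sum_range_sub']; ring
      _ ≤ ∑ j ∈ range (n + 1), B j := by rw [Finset.sum_range_succ']; linarith
      _ ≤ 1 := sum_range_Bspl_le_one ht (k + 1) (n + 1) x

lemma Bspl_le_one (ht : StrictMono t) (k j : ℕ) (x : ℝ) : Bspl t j k x ≤ 1 :=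
  calc Bspl t j k x ≤ ∑ i ∈ range (j + 1), Bspl t i k x :=
        Finset.single_le_sum (f := fun i => Bspl t i k x) (fun _ _ => Bspl_nonneg ht)
          (Finset.self_mem_range_succ j)
    _ ≤ 1 := sum_range_Bspl_le_one ht k (j + 1) x

lemma Bspl_two_eq_max_min (ht : StrictMono t) (j : ℕ) (x : ℝ) :
    Bspl t j 2 x = max 0 (min (bsplWeight t j 1 x) (1 - bsplWeight t (j + 1) 1 x)) := by
  have h₁ : t j < t (j + 1) := ht (by omega)
  have h₂ : t (j + 1) < t (j + 2) := ht (by omega)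
  have hd₁ : 0 < t (j + 1) - t j := sub_pos.2 h₁
  have hd₂ : 0 < t (j + 2) - t (j + 1) := sub_pos.2 h₂
  have hb : 1 - bsplWeight t (j + 1) 1 x = (t (j + 2) - x) / (t (j + 2) - t (j + 1)) := by
    rw [bsplWeight, show j + 1 + 1 = j + 2 by omega]
    field_simp
    ring
  rw [Bspl_add_two_eq_weight ht, Bspl_one, Bspl_one, hb, bsplWeight]
  simp only [show j + 1 + 1 = j + 2 by omega]
  rcases lt_or_ge x (t j) with hx₀ | hx₀
  · have : (x - t j) / (t (j + 1) - t j) < 0 := div_neg_of_neg_of_pos (by linarith) hd₁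
    simp [hx₀, not_le.2 (hx₀.trans h₁), min_le_of_left_le this.le]
  rcases lt_or_ge x (t (j + 1)) with hx₁ | hx₁
  · have ha₀ : 0 ≤ (x - t j) / (t (j + 1) - t j) := div_nonneg (by linarith) hd₁.le
    have ha₁ : (x - t j) / (t (j + 1) - t j) ≤ 1 := (div_le_one hd₁).2 (by linarith)
    have hb₁ : 1 ≤ (t (j + 2) - x) / (t (j + 2) - t (j + 1)) :=
      (one_le_div hd₂).2 (by linarith)
    simp [hx₀, hx₁, not_le.2 hx₁, ha₀, ha₁.trans hb₁]
  rcases lt_or_ge x (t (j + 2)) with hx₂ | hx₂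
  · have hb₀ : 0 ≤ (t (j + 2) - x) / (t (j + 2) - t (j + 1)) :=
      div_nonneg (by linarith) hd₂.le
    have hb₁ : (t (j + 2) - x) / (t (j + 2) - t (j + 1)) ≤ 1 :=
      (div_le_one hd₂).2 (by linarith)
    have ha₁ : 1 ≤ (x - t j) / (t (j + 1) - t j) := (one_le_div hd₁).2 (by linarith)
    simp [hx₁, hx₂, not_lt.2 hx₁, hb₀, hb₁.trans ha₁]
  · have : (t (j + 2) - x) / (t (j + 2) - t (j + 1)) ≤ 0 :=
      div_nonpos_of_nonpos_of_nonneg (by linarith) hd₂.le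
    simp [not_lt.2 hx₂, not_lt.2 hx₁, min_le_of_right_le this]

lemma continuous_Bspl (ht : StrictMono t) : ∀ k j, Continuous (Bspl t j (k + 2))
  | 0, j => by
    have hω : ∀ i, Continuous (bsplWeight t i 1) := fun i =>
      (continuous_id.sub continuous_const).div_const _
    simp only [funext (Bspl_two_eq_max_min ht j)]
    exact continuous_const.max ((hω j).min (continuous_const.sub (hω (j + 1))))
  | k + 1, j => by
    have hω : ∀ i, Continuous (bsplWeight t i (k + 2)) := fun i =>
      (continuous_id.sub continuous_const).div_const _
    simp only [funext (Bspl_add_two_eq_weight ht j (k + 1))]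
    exact ((hω j).mul (continuous_Bspl ht k j)).add
      ((continuous_const.sub (hω (j + 1))).mul (continuous_Bspl ht k (j + 1)))

/-- The derivative of `Bspl t j (k + 1)` (note the shift of the order by one). -/
noncomputable def bsplDeriv (t : ℕ → ℝ) (j k : ℕ) (x : ℝ) : ℝ :=
  k / (t (j + k) - t j) * Bspl t j k x - k / (t (j + k + 1) - t (j + 1)) * Bspl t (j + 1) k x

lemma bsplDeriv_succ (ht : StrictMono t) (j k : ℕ) (x : ℝ) :
    bsplDeriv t j (k + 1) x
      = 1 / (t (j + (k + 1)) - t j) * Bspl t j (k + 1) x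
        + bsplWeight t j (k + 1) x * bsplDeriv t j k x
        - 1 / (t (j + 1 + (k + 1)) - t (j + 1)) * Bspl t (j + 1) (k + 1) x
        + (1 - bsplWeight t (j + 1) (k + 1) x) * bsplDeriv t (j + 1) k x := by
  have hd : ∀ {a b}, a < b → t b - t a ≠ 0 := fun h => (sub_pos.2 (ht h)).ne'
  rcases k with _ | k
  · simp [bsplDeriv]
  · simp only [bsplDeriv, Bspl_add_two_eq_weight ht, bsplWeight,
      show j + 1 + (k + 1 + 1) = j + k + 3 by omega,
      show j + (k + 1 + 1) = j + k + 2 by omega,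
      show j + 1 + (k + 1) = j + k + 2 by omega, show j + 1 + 1 = j + 2 by omega,
      show j + (k + 1) = j + k + 1 by omega, show j + k + 2 + 1 = j + k + 3 by omega,
      show j + k + 1 + 1 = j + k + 2 by omega, show j + 2 + (k + 1) = j + k + 3 by omega]
    field_simp [hd (show j < j + k + 1 by omega), hd (show j < j + k + 2 by omega),
      hd (show j + 1 < j + k + 2 by omega), hd (show j + 1 < j + k + 3 by omega),
      hd (show j + 2 < j + k + 3 by omega)]
    push_cast
    ring

lemma hasDerivAt_Bspl_of_forall_ne (ht : StrictMono t) :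
    ∀ {k j : ℕ} {x : ℝ}, (∀ i ≤ j + k + 1, t i ≠ x) →
      HasDerivAt (Bspl t j (k + 1)) (bsplDeriv t j k x) x
  | 0, j, x, hx => by
    rw [show bsplDeriv t j 0 x = 0 by simp [bsplDeriv]]
    refine (hasDerivAt_const x (Bspl t j 1 x)).congr_of_eventuallyEq ?_
    filter_upwards [eventually_le_iff_of_ne (hx j (by omega)),
      eventually_le_iff_of_ne (hx (j + 1) (by omega))] with y h₁ h₂
    show (if t j ≤ y ∧ y < t (j + 1) then (1 : ℝ) else 0) = Bspl t j 1 x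
    simp only [Bspl_one, ← not_le, h₁, h₂]
  | k + 1, j, x, hx => by
    have hω : ∀ i, HasDerivAt (bsplWeight t i (k + 1)) (1 / (t (i + (k + 1)) - t i)) x :=
      fun i => ((hasDerivAt_id x).sub_const (t i)).div_const _
    have h₁ := hasDerivAt_Bspl_of_forall_ne ht (k := k) (j := j) fun i _ => hx i (by omega)
    have h₂ := hasDerivAt_Bspl_of_forall_ne ht (k := k) (j := j + 1) fun i _ => hx i (by omega)
    rw [funext (Bspl_add_two_eq_weight ht j k), bsplDeriv_succ ht]
    exact (((hω j).fun_mul h₁).fun_add (((hω (j + 1)).const_sub 1).fun_mul h₂)).congr_deriv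
      (by ring)

lemma continuous_bsplDeriv (ht : StrictMono t) (k j : ℕ) : Continuous (bsplDeriv t j (k + 2)) :=
  (continuous_const.mul (continuous_Bspl ht k j)).sub
    (continuous_const.mul (continuous_Bspl ht k (j + 1)))

lemma hasDerivAt_Bspl (ht : StrictMono t) (k j : ℕ) (x : ℝ) :
    HasDerivAt (Bspl t j (k + 3)) (bsplDeriv t j (k + 2) x) x := by
  have hknots : ∀ᶠ y in 𝓝[≠] x, ∀ i ∈ Set.Iic (j + (k + 2) + 1), t i ≠ y := by
    refine (eventually_all_finite (finite_Iic _)).2 fun i _ => ?_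
    by_cases hi : t i = x
    · filter_upwards [self_mem_nhdsWithin] with y hy
      exact hi ▸ Ne.symm hy
    · exact (eventually_ne_nhdsWithin (Ne.symm hi)).mono fun y hy => Ne.symm hy
  refine hasDerivAt_of_eventually_hasDerivAt ?_ (continuous_Bspl ht (k + 1) j).continuousAt
    (continuous_bsplDeriv ht k j).continuousAt
  filter_upwards [hknots] with y hy
  exact hasDerivAt_Bspl_of_forall_ne ht hy

lemma deriv_Bspl (ht : StrictMono t) (k j : ℕ) :
    deriv (Bspl t j (k + 3)) = bsplDeriv t j (k + 2) :=
  funext fun x => (hasDerivAt_Bspl ht k j x).deriv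

lemma contDiff_Bspl (ht : StrictMono t) : ∀ k j : ℕ, ContDiff ℝ k (Bspl t j (k + 2))
  | 0, j => contDiff_zero.2 (continuous_Bspl ht 0 j)
  | k + 1, j => by
    refine (contDiff_succ_iff_deriv (n := k)).2
      ⟨fun x => (hasDerivAt_Bspl ht k j x).differentiableAt, by simp, ?_⟩
    rw [deriv_Bspl ht]
    exact (contDiff_const.mul (contDiff_Bspl ht k j)).sub
      (contDiff_const.mul (contDiff_Bspl ht k (j + 1)))

lemma strictMono_of_forall_le_sub_succ (hhN : 0 < hN) (hgap : ∀ i, hN ≤ t (i + 1) - t i) :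
    StrictMono t :=
  strictMono_nat_of_lt_succ fun i => by linarith [hgap i]

lemma le_sub_of_forall_le_sub_succ (hhN : 0 < hN) (hgap : ∀ i, hN ≤ t (i + 1) - t i) {a b : ℕ}
    (h : a < b) : hN ≤ t b - t a := by
  have := (strictMono_of_forall_le_sub_succ hhN hgap).monotone (show a + 1 ≤ b from h)
  linarith [hgap a]

lemma abs_div_sub_le_div (hhN : 0 < hN) (hgap : ∀ i, hN ≤ t (i + 1) - t i) {a b : ℕ}
    (h : a < b) {c : ℝ} (hc : 0 ≤ c) : |c / (t b - t a)| ≤ c / hN := by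
  have hd := le_sub_of_forall_le_sub_succ hhN hgap h
  rw [abs_of_nonneg (div_nonneg hc (by linarith))]
  exact div_le_div_of_nonneg_left hc hhN hd

lemma abs_iteratedDeriv_Bspl_le (hhN : 0 < hN) (hgap : ∀ i, hN ≤ t (i + 1) - t i) :
    ∀ {m k : ℕ} (j : ℕ) (x : ℝ), m + 2 ≤ k →
      |iteratedDeriv m (Bspl t j k) x| ≤ (2 / hN) ^ m * (k - 1).descFactorial m
  | 0, k, j, x, _ => by
    have ht := strictMono_of_forall_le_sub_succ hhN hgap
    simpa [abs_of_nonneg (Bspl_nonneg ht)] using Bspl_le_one ht k j x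
  | m + 1, k, j, x, hmk => by
    have ht := strictMono_of_forall_le_sub_succ hhN hgap
    obtain ⟨K, rfl⟩ : ∃ K, k = K + 3 := ⟨k - 3, by omega⟩
    have hK : ∀ i, ContDiffAt ℝ m (Bspl t i (K + 2)) x := fun i =>
      ((contDiff_Bspl ht K i).of_le (by exact_mod_cast (show m ≤ K by omega))).contDiffAt
    have ih : ∀ i,
        |iteratedDeriv m (Bspl t i (K + 2)) x| ≤ (2 / hN) ^ m * (K + 1).descFactorial m :=
      fun i => abs_iteratedDeriv_Bspl_le hhN hgap i x (by omega)
    set c₁ : ℝ := ((K + 2 : ℕ) : ℝ) / (t (j + (K + 2)) - t j)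
    set c₂ : ℝ := ((K + 2 : ℕ) : ℝ) / (t (j + (K + 2) + 1) - t (j + 1))
    have hc₁ : |c₁| ≤ (K + 2 : ℕ) / hN :=
      abs_div_sub_le_div hhN hgap (by omega) (by positivity)
    have hc₂ : |c₂| ≤ (K + 2 : ℕ) / hN :=
      abs_div_sub_le_div hhN hgap (by omega) (by positivity)
    rw [iteratedDeriv_succ', deriv_Bspl ht]
    show |iteratedDeriv m (fun y => c₁ * Bspl t j (K + 2) y - c₂ * Bspl t (j + 1) (K + 2) y) x|
      ≤ _
    rw [iteratedDeriv_fun_sub (contDiffAt_const.mul (hK j)) (contDiffAt_const.mul (hK (j + 1))),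
      iteratedDeriv_const_mul _ (hK j), iteratedDeriv_const_mul _ (hK (j + 1))]
    calc _ ≤ |c₁| * |iteratedDeriv m (Bspl t j (K + 2)) x|
          + |c₂| * |iteratedDeriv m (Bspl t (j + 1) (K + 2)) x| := by
          rw [← abs_mul, ← abs_mul]
          exact abs_sub _ _
      _ ≤ (K + 2 : ℕ) / hN * ((2 / hN) ^ m * (K + 1).descFactorial m)
          + (K + 2 : ℕ) / hN * ((2 / hN) ^ m * (K + 1).descFactorial m) := by
          gcongr
          exacts [ih j, ih (j + 1)]
      _ = (2 / hN) ^ (m + 1) * (K + 3 - 1).descFactorial (m + 1) := by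
          rw [show K + 3 - 1 = K + 1 + 1 from rfl, Nat.succ_descFactorial_succ]
          push_cast
          ring

end BSpline

theorem stmt_13_general (t : ℕ → ℝ) (k : ℕ) (hN : ℝ) (hhN : 0 < hN)
    (hgap : ∀ i : ℕ, hN ≤ t (i+1) - t i)
    (α : ℕ) (hαk : α < k - 1) :
    ∀ j : ℕ, ∀ θ ∈ Set.Ioo (t j) (t (j+k)),
      |iteratedDeriv α (fun x => Bspl t j k x) θ| ≤
        (2 ^ α / hN ^ α) * ((Nat.factorial (k-1) : ℝ) / (Nat.factorial (k-α-1) : ℝ)) := by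
  intro j θ _
  have hfac : ((k - 1).descFactorial α : ℝ) = (k - 1).factorial / (k - α - 1).factorial := by
    rw [eq_div_iff (by positivity), mul_comm, show k - α - 1 = k - 1 - α by omega]
    exact_mod_cast Nat.factorial_mul_descFactorial (by omega)
  rw [← div_pow, ← hfac]
  exact abs_iteratedDeriv_Bspl_le hhN hgap j θ (by omega)

theorem stmt_13 (t : ℕ → ℝ) (k : ℕ) (hN : ℝ) (hhN : 0 < hN)
    (hgap : ∀ i : ℕ, hN ≤ t (i+1) - t i)
    (α : ℕ) (hα1 : 1 ≤ α) (hαk : α < k - 1) :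
    ∀ j : ℕ, ∀ θ ∈ Set.Ioo (t j) (t (j+k)),
      |iteratedDeriv α (fun x => Bspl t j k x) θ| ≤
        (2 ^ α / hN ^ α) * ((Nat.factorial (k-1) : ℝ) / (Nat.factorial (k-α-1) : ℝ)) :=
  stmt_13_general t k hN hhN hgap α hαk
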